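/- In the setting of the HOT iteration, let {w̄ᵏ = (ȳᵏ, z̄ᵏ, x̄ᵏ)} be the generated sequence, let w* = (y*, z*, x*) be its limit point (a KKT point), and set R₀ = ‖(x⁰ − x*) + σ (z⁰ − z*)‖. Then for all k ≥ 0, ‖ℛ(w̄ᵏ)‖ ≤ ((σ + 1)/σ) · R₀/(k + 1), where ℛ(w) = ( b − A x, z − Π_{ℝ₊^N}(z − x), c − Aᵀ y − z ) for w = (y, z, x). -/

import Mathlib

open Matrix Finset Filter Topology

noncomputable section

/-- The bijection between row indices `r ∈ Fin (nm − 1)` and pairs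
`(l,k) ∈ Fin n × Fin m` (with `k` the inner/fast index): `r ↦ (r / m, r % m)`. -/
def rowIdx (m n : ℕ) (hm : 0 < m) (r : Fin (n * m - 1)) : Fin n × Fin m :=
  (⟨r.1 / m, (Nat.div_lt_iff_lt_mul hm).mpr (lt_of_lt_of_le r.2 (Nat.sub_le _ _))⟩,
   ⟨r.1 % m, Nat.mod_lt _ hm⟩)

/-- The constraint matrix `A = [[A₁, A₂], [A₃, 0], [0, A₄]] ∈ ℝ^{M₃ × N}` of the
reduced OT model (`M = mn`, `M₃ = 3M − 1`, `N = m²n + mn²`) with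
`A₁ = I_M ⊗ 1ₘᵀ`, `A₂ = −1ₙᵀ ⊗ I_M`, `A₃ = Iₙ ⊗ (1ₘᵀ ⊗ Iₘ)`,
`A₄ = diag(1ₙᵀ ⊗ Iₘ, …, 1ₙᵀ ⊗ Iₘ, 1ₙᵀ ⊗ Īₘ)`.  Columns: `f⁽¹⁾`-triples `(j,k,i)`
and `f⁽²⁾`-triples `(l,j,k)`; row blocks: bins `(j,k)`, bins `(j,i)`, pairs `(l,k)`
with the last pair deleted. -/
def Amat (m n : ℕ) (hm : 0 < m) :
    Matrix ((Fin n × Fin m) ⊕ (Fin n × Fin m) ⊕ Fin (n * m - 1))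
      ((Fin n × Fin m × Fin m) ⊕ (Fin n × Fin n × Fin m)) ℝ :=
  Matrix.of fun r c =>
    match r, c with
    | .inl p, .inl c1 => if p.1 = c1.1 ∧ p.2 = c1.2.1 then 1 else 0
    | .inl p, .inr c2 => if p.1 = c2.2.1 ∧ p.2 = c2.2.2 then -1 else 0
    | .inr (.inl p), .inl c1 => if p.1 = c1.1 ∧ p.2 = c1.2.2 then 1 else 0
    | .inr (.inl _), .inr _ => 0
    | .inr (.inr _), .inl _ => 0
    | .inr (.inr r), .inr c2 =>
        if (rowIdx m n hm r).1 = c2.1 ∧ (rowIdx m n hm r).2 = c2.2.2 then 1 else 0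

/-- The right-hand side `b = (0_M; μ¹; Ī_M μ²) ∈ ℝ^{M₃}`. -/
def bvec (m n : ℕ) (hm : 0 < m) (μ1 μ2 : Fin n × Fin m → ℝ) :
    (Fin n × Fin m) ⊕ (Fin n × Fin m) ⊕ Fin (n * m - 1) → ℝ :=
  Sum.elim (0 : Fin n × Fin m → ℝ) (Sum.elim μ1 (fun r => μ2 (rowIdx m n hm r)))

/-- The cost vector `c = (c¹; c²) ∈ ℝ^N` with `c¹_{i,k,j} = (k−i)²` (at the
`f⁽¹⁾`-column `(j,k,i)`) and `c²_{k,j,l} = (j−l)²` (at the `f⁽²⁾`-column `(l,j,k)`). -/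
def cvec (m n : ℕ) : (Fin n × Fin m × Fin m) ⊕ (Fin n × Fin n × Fin m) → ℝ :=
  Sum.elim (fun q => (((q.2.1 : ℕ) : ℝ) - ((q.2.2 : ℕ) : ℝ)) ^ 2)
    (fun q => (((q.2.1 : ℕ) : ℝ) - ((q.1 : ℕ) : ℝ)) ^ 2)

lemma rowIdx_inj (m n : ℕ) (hm : 0 < m) : Function.Injective (rowIdx m n hm) := by
  intro r r' h
  have h1 : r.1 / m = r'.1 / m := congrArg (fun p => (p.1 : ℕ)) h
  have h2 : r.1 % m = r'.1 % m := congrArg (fun p => (p.2 : ℕ)) h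
  refine Fin.ext ?_
  calc r.1 = m * (r.1 / m) + r.1 % m := (Nat.div_add_mod _ _).symm
    _ = m * (r'.1 / m) + r'.1 % m := by rw [h1, h2]
    _ = r'.1 := Nat.div_add_mod _ _

lemma rowIdx_ne_last (m n : ℕ) (hm : 0 < m) (hn : 0 < n) (r : Fin (n * m - 1)) :
    rowIdx m n hm r ≠ (⟨n-1, Nat.sub_lt hn one_pos⟩, ⟨m-1, Nat.sub_lt hm one_pos⟩) := by
  intro h
  have h1 : r.1 / m = n - 1 := congrArg (fun p => (p.1 : ℕ)) h
  have h2 : r.1 % m = m - 1 := congrArg (fun p => (p.2 : ℕ)) h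
  have h3 := Nat.div_add_mod r.1 m
  rw [h1, h2] at h3
  have h4 : r.1 < n * m - 1 := r.2
  have h5 : m * (n - 1) = m * n - m := by
    cases n with
    | zero => omega
    | succ n' => simp [Nat.mul_succ]
  have : m * n = n * m := Nat.mul_comm m n
  omega

lemma ker_At (m n : ℕ) (hm : 0 < m) (hn : 0 < n)
    (yv : (Fin n × Fin m) ⊕ (Fin n × Fin m) ⊕ Fin (n * m - 1) → ℝ)
    (h : (Amat m n hm)ᵀ *ᵥ yv = 0) : yv = 0 := by
  have hcol : ∀ c, ∑ r, Amat m n hm r c * yv r = 0 := by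
    intro c
    have := congrFun h c
    simpa [Matrix.mulVec, dotProduct, Matrix.transpose_apply] using this
  -- helper to evaluate indicator sums over Fin n × Fin m
  have hind : ∀ (f : Fin n × Fin m → ℝ) (q : Fin n × Fin m),
      (∑ p : Fin n × Fin m, (if p.1 = q.1 ∧ p.2 = q.2 then (1:ℝ) else 0) * f p) = f q := by
    intro f q
    rw [Fintype.sum_eq_single q (fun p hp => by
      have : ¬(p.1 = q.1 ∧ p.2 = q.2) := fun ⟨h1, h2⟩ => hp (Prod.ext h1 h2)
      simp [this])]
    simp
  -- equation from f1-columns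
  have E1 : ∀ (j : Fin n) (k i : Fin m),
      yv (.inl (j, k)) + yv (.inr (.inl (j, i))) = 0 := by
    intro j k i
    have := hcol (.inl (j, k, i))
    rw [Fintype.sum_sum_type, Fintype.sum_sum_type] at this
    simp only [Amat, Matrix.of_apply] at this
    rw [hind (fun p => yv (.inl p)) (j,k), hind (fun p => yv (.inr (.inl p))) (j,i)] at this
    simpa using this
  -- equation from f2-columns
  have E2 : ∀ (l : Fin n) (j : Fin n) (k : Fin m),
      -yv (.inl (j, k)) + (∑ r : Fin (n*m-1),
        (if rowIdx m n hm r = (l, k) then (1:ℝ) else 0) * yv (.inr (.inr r))) = 0 := by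
    intro l j k
    have := hcol (.inr (l, j, k))
    rw [Fintype.sum_sum_type, Fintype.sum_sum_type] at this
    simp only [Amat, Matrix.of_apply] at this
    have e1 : (∑ p : Fin n × Fin m, (if p.1 = j ∧ p.2 = k then (-1:ℝ) else 0) * yv (.inl p))
        = -yv (.inl (j,k)) := by
      rw [show (fun p : Fin n × Fin m => (if p.1 = j ∧ p.2 = k then (-1:ℝ) else 0) * yv (.inl p))
          = fun p => (if p.1 = j ∧ p.2 = k then (1:ℝ) else 0) * (-yv (.inl p)) by
        funext p; by_cases hc : p.1 = j ∧ p.2 = k <;> simp [hc]]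
      rw [hind (fun p => -yv (.inl p)) (j,k)]
    have e2 : ∀ r : Fin (n*m-1),
        (if (rowIdx m n hm r).1 = l ∧ (rowIdx m n hm r).2 = k then (1:ℝ) else 0)
        = (if rowIdx m n hm r = (l, k) then (1:ℝ) else 0) := by
      intro r
      congr 1
      simp [Prod.ext_iff]
    simp only [e2] at this
    rw [e1] at this
    simpa using this
  set mlast : Fin m := ⟨m-1, Nat.sub_lt hm one_pos⟩
  set nlast : Fin n := ⟨n-1, Nat.sub_lt hn one_pos⟩
  have halpha_last : ∀ j : Fin n, yv (.inl (j, mlast)) = 0 := by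
    intro j
    have := E2 nlast j mlast
    rw [Finset.sum_eq_zero (fun r _ => by
      have := rowIdx_ne_last m n hm hn r
      simp only [mlast, nlast]
      rw [if_neg (by exact this), zero_mul])] at this
    linarith
  have hbeta : ∀ (j : Fin n) (i : Fin m), yv (.inr (.inl (j, i))) = 0 := by
    intro j i
    have := E1 j mlast i
    have := halpha_last j
    linarith
  have halpha : ∀ (j : Fin n) (k : Fin m), yv (.inl (j, k)) = 0 := by
    intro j k
    have := E1 j k mlast
    have := hbeta j mlast
    linarith
  have hgamma : ∀ r : Fin (n*m-1), yv (.inr (.inr r)) = 0 := by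
    intro r
    have := E2 (rowIdx m n hm r).1 ⟨0, hn⟩ (rowIdx m n hm r).2
    rw [halpha] at this
    rw [Fintype.sum_eq_single r (fun r' hr' => by
      rw [if_neg (fun hc => hr' (rowIdx_inj m n hm (by rw [hc]))) , zero_mul])] at this
    simpa using this
  funext r
  match r with
  | .inl p => exact halpha p.1 p.2
  | .inr (.inl p) => exact hbeta p.1 p.2
  | .inr (.inr r) => exact hgamma r

lemma isUnit_S (m n : ℕ) (hm : 0 < m) (hn : 0 < n) :
    IsUnit (Amat m n hm * (Amat m n hm)ᵀ).det := by
  rw [← Matrix.isUnit_iff_isUnit_det]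
  rw [← Matrix.mulVec_injective_iff_isUnit]
  intro v w hvw
  have h0 : (Amat m n hm * (Amat m n hm)ᵀ) *ᵥ (v - w) = 0 := by
    rw [Matrix.mulVec_sub, hvw, sub_self]
  have hker : (Amat m n hm)ᵀ *ᵥ (v - w) = 0 := by
    set A := Amat m n hm
    have hdot : (v - w) ⬝ᵥ ((A * Aᵀ) *ᵥ (v - w)) = (Aᵀ *ᵥ (v - w)) ⬝ᵥ (Aᵀ *ᵥ (v - w)) := by
      rw [← Matrix.mulVec_mulVec, Matrix.dotProduct_mulVec, ← Matrix.mulVec_transpose]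
    rw [h0, dotProduct_zero] at hdot
    have hsum : ∑ i, (Aᵀ *ᵥ (v - w)) i ^ 2 = 0 := by
      rw [← hdot.symm]
      simp [dotProduct, pow_two]
    funext i
    have := (Finset.sum_eq_zero_iff_of_nonneg (fun i _ => sq_nonneg ((Aᵀ *ᵥ (v - w)) i))).mp hsum i (Finset.mem_univ i)
    simpa using pow_eq_zero_iff (n := 2) (by norm_num) |>.mp this
  have := ker_At m n hm hn (v - w) hker
  exact sub_eq_zero.mp this

lemma max_firm (a b : ℝ) : (max a 0 - max b 0)^2 ≤ (max a 0 - max b 0) * (a - b) := by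
  rcases le_total a 0 with ha | ha <;> rcases le_total b 0 with hb | hb <;>
    simp [max_eq_left, max_eq_right, ha, hb] <;> nlinarith

-- pointwise residual-2 bound

lemma key2 (σ : ℝ) (hσ : 0 < σ) (xx z cc ay X : ℝ)
    (hX : X = xx + σ * (ay + z - cc)) :
    (max (cc - ay - X/σ) 0 - max (max (cc - ay - X/σ) 0 - X) 0)^2
      ≤ ((xx - X) + σ * (z - max (cc - ay - X/σ) 0))^2 := by
  have hσ' : σ ≠ 0 := ne_of_gt hσ
  set v : ℝ := cc - ay - X/σ with hv
  have hsv : σ * v = xx + σ * z - 2*X := by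
    rw [hv]; field_simp; nlinarith [hX]
  rcases le_total v 0 with hvn | hvp
  · have hd : (xx - X) + σ * (z - max v 0) = σ * v + X := by
      rw [max_eq_right hvn]; nlinarith [hsv]
    rw [hd, max_eq_right hvn]
    rcases le_total X 0 with hXn | hXp
    · rw [max_eq_left (by linarith)]
      nlinarith [mul_nonneg (mul_nonneg hσ.le (neg_nonneg.mpr hvn)) (neg_nonneg.mpr hXn)]
    · rw [max_eq_right (by linarith)]
      norm_num
      positivity
  · have hd : (xx - X) + σ * (z - max v 0) = X := by
      rw [max_eq_left hvp]; nlinarith [hsv]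
    rw [hd, max_eq_left hvp]
    rcases le_total (v - X) 0 with h1 | h1
    · rw [max_eq_right h1]; nlinarith
    · rw [max_eq_left h1]; ring_nf; nlinarith

-- pointwise residual-3 identity

lemma key3 (σ : ℝ) (hσ : 0 < σ) (xx z cc ay X zb : ℝ)
    (hX : X = xx + σ * (ay + z - cc)) :
    (cc - ay - zb)^2 = ((xx - X) + σ * (z - zb))^2 / σ^2 := by
  have hσ' : σ ≠ 0 := ne_of_gt hσ
  have h : cc - ay - zb = ((xx - X) + σ * (z - zb)) / σ := by
    rw [eq_div_iff hσ']; linear_combination hX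
  rw [h, div_pow]

-- Halpern invariant

lemma halpern_inv {ι : Type*} [Fintype ι] (u ub : ℕ → ι → ℝ)
    (hmono : ∀ k l : ℕ, ((u k - ub k) - (u l - ub l)) ⬝ᵥ ((u k - ub k) - (u l - ub l))
        ≤ ((u k - ub k) - (u l - ub l)) ⬝ᵥ (u k - u l))
    (hrec : ∀ k : ℕ, u (k + 1) =
      (1 / ((k : ℝ) + 2)) • u 0 + (((k : ℝ) + 1) / ((k : ℝ) + 2)) • ((2 : ℝ) • ub k - u k)) :
    ∀ k : ℕ, (k : ℝ) * ((u k - ub k) ⬝ᵥ (u k - ub k)) ≤ (u k - ub k) ⬝ᵥ (u 0 - u k) := by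
  have hrec1 : ∀ k : ℕ, ((k : ℝ) + 2) • (u (k+1) - u k)
      = (u 0 - u k) - (2 * ((k : ℝ) + 1)) • (u k - ub k) := by
    intro k
    have h2 : ((k : ℝ) + 2) ≠ 0 := by positivity
    rw [hrec k]
    match_scalars <;> field_simp <;> ring
  have hrec2 : ∀ k : ℕ, ((k : ℝ) + 2) • (u 0 - u (k+1))
      = (((k : ℝ) + 1)) • (u 0 - u k) + (2 * ((k : ℝ) + 1)) • (u k - ub k) := by
    intro k
    have h2 : ((k : ℝ) + 2) ≠ 0 := by positivity
    rw [hrec k]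
    match_scalars <;> field_simp <;> ring
  intro k
  induction k with
  | zero => simp
  | succ k ih =>
    set K : ℝ := (k : ℝ) with hK
    have hK0 : 0 ≤ K := Nat.cast_nonneg k
    set d1 := u k - ub k with hd1
    set d2 := u (k+1) - ub (k+1) with hd2
    set w := u 0 - u k with hw
    -- scalars
    set s := d1 ⬝ᵥ d1 with hs
    set t := d2 ⬝ᵥ d2 with ht
    set p := d2 ⬝ᵥ d1 with hp
    set a := d1 ⬝ᵥ w with ha
    set q := d2 ⬝ᵥ w with hq
    have hcomm : d1 ⬝ᵥ d2 = p := dotProduct_comm d1 d2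
    -- scaled monotonicity
    have hM := hmono (k+1) k
    have hMs : (K + 2) * ((d2 - d1) ⬝ᵥ (d2 - d1)) ≤ (d2 - d1) ⬝ᵥ (w - (2*(K+1)) • d1) := by
      calc (K + 2) * ((d2 - d1) ⬝ᵥ (d2 - d1))
          ≤ (K + 2) * ((d2 - d1) ⬝ᵥ (u (k+1) - u k)) := by
            apply mul_le_mul_of_nonneg_left hM (by positivity)
        _ = (d2 - d1) ⬝ᵥ ((K + 2) • (u (k+1) - u k)) := by
            rw [dotProduct_smul, smul_eq_mul]
        _ = (d2 - d1) ⬝ᵥ (w - (2*(K+1)) • d1) := by rw [hrec1 k]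
    have hMs' : (K + 2) * (t - 2*p + s) ≤ q - a - (2*(K+1)) * (p - s) := by
      have e1 : (d2 - d1) ⬝ᵥ (d2 - d1) = t - 2*p + s := by
        simp only [sub_dotProduct, dotProduct_sub, ht, hp, hs, hcomm]
        ring
      have e2 : (d2 - d1) ⬝ᵥ (w - (2*(K+1)) • d1)
          = q - a - (2*(K+1)) * (p - s) := by
        simp only [sub_dotProduct, dotProduct_sub, dotProduct_smul,
          smul_eq_mul, hq, ha, hp, hs, hcomm] <;> ring
      rw [e1, e2] at hMs
      exact hMs
    -- key inequality
    have hkey : (K + 2) * t ≤ q + 2 * p := by nlinarith [ih]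
    -- conclude
    have hgoal2 : (K + 2) * (d2 ⬝ᵥ (u 0 - u (k+1))) = (K+1) * q + (2*(K+1)) * p := by
      calc (K + 2) * (d2 ⬝ᵥ (u 0 - u (k+1))) = d2 ⬝ᵥ ((K + 2) • (u 0 - u (k+1))) := by
            rw [dotProduct_smul, smul_eq_mul]
        _ = (K+1) * q + (2*(K+1)) * p := by
            rw [hrec2 k]
            simp only [dotProduct_add, dotProduct_smul, smul_eq_mul, hq, hp]
            rfl
    have hfinal : (K + 2) * (((K:ℝ) + 1) * t) ≤ (K + 2) * (d2 ⬝ᵥ (u 0 - u (k+1))) := by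
      rw [hgoal2]
      nlinarith [hkey, mul_le_mul_of_nonneg_left hkey (by linarith : (0:ℝ) ≤ K + 1)]
    have hgoal : ((K:ℝ) + 1) * t ≤ d2 ⬝ᵥ (u 0 - u (k+1)) :=
      le_of_mul_le_mul_left hfinal (by positivity)
    push_cast
    linarith [hgoal]

lemma step_firm {R C : Type*} [Fintype R] [Fintype C] [DecidableEq R]
    (A : Matrix R C ℝ) (hdet : IsUnit (A * Aᵀ).det) (σ : ℝ) (hσ : 0 < σ)
    (b : R → ℝ) (c : C → ℝ)
    (u1 u2 ub1 ub2 : C → ℝ) (yb1 yb2 : R → ℝ) (xb1 xb2 zb1 zb2 : C → ℝ)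
    (hy1 : yb1 = (A * Aᵀ)⁻¹ *ᵥ (σ⁻¹ • b - A *ᵥ (σ⁻¹ • u1 - c)))
    (hx1 : xb1 = u1 + σ • (Aᵀ *ᵥ yb1 - c))
    (hz1 : ∀ i, zb1 i = max (c i - (Aᵀ *ᵥ yb1) i - σ⁻¹ * xb1 i) 0)
    (hu1 : ub1 = xb1 + σ • zb1)
    (hy2 : yb2 = (A * Aᵀ)⁻¹ *ᵥ (σ⁻¹ • b - A *ᵥ (σ⁻¹ • u2 - c)))
    (hx2 : xb2 = u2 + σ • (Aᵀ *ᵥ yb2 - c))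
    (hz2 : ∀ i, zb2 i = max (c i - (Aᵀ *ᵥ yb2) i - σ⁻¹ * xb2 i) 0)
    (hu2 : ub2 = xb2 + σ • zb2) :
    ((u1 - ub1) - (u2 - ub2)) ⬝ᵥ ((u1 - ub1) - (u2 - ub2))
      ≤ ((u1 - ub1) - (u2 - ub2)) ⬝ᵥ (u1 - u2) := by
  have hσ' : σ ≠ 0 := ne_of_gt hσ
  set S := A * Aᵀ with hS
  set P := Aᵀ * S⁻¹ * A with hP
  set δ := u1 - u2 with hδ
  set ζ := zb1 - zb2 with hζdef
  set e := P *ᵥ δ with he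
  -- symmetry and idempotence of P
  have hSsym : Sᵀ = S := by rw [hS, Matrix.transpose_mul, Matrix.transpose_transpose]
  have hSisym : (S⁻¹)ᵀ = S⁻¹ := by rw [Matrix.transpose_nonsing_inv, hSsym]
  have hPsym : Pᵀ = P := by
    rw [hP, Matrix.transpose_mul, Matrix.transpose_mul, Matrix.transpose_transpose, hSisym,
      Matrix.mul_assoc]
  have hPP : P * P = P := by
    rw [hP]
    calc Aᵀ * S⁻¹ * A * (Aᵀ * S⁻¹ * A) = Aᵀ * S⁻¹ * (A * Aᵀ) * (S⁻¹ * A) := by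
          simp only [Matrix.mul_assoc]
      _ = Aᵀ * S⁻¹ * S * (S⁻¹ * A) := by rw [← hS]
      _ = Aᵀ * ((S⁻¹ * S) * S⁻¹) * A := by simp only [Matrix.mul_assoc]
      _ = Aᵀ * S⁻¹ * A := by rw [Matrix.nonsing_inv_mul S hdet, Matrix.one_mul]
  -- difference of the y-parts
  have hyd : Aᵀ *ᵥ yb1 - Aᵀ *ᵥ yb2 = -(σ⁻¹ • e) := by
    have harg : (σ⁻¹ • b - A *ᵥ (σ⁻¹ • u1 - c)) - (σ⁻¹ • b - A *ᵥ (σ⁻¹ • u2 - c))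
        = -(σ⁻¹ • (A *ᵥ δ)) := by
      simp only [Matrix.mulVec_sub, Matrix.mulVec_smul, hδ]
      module
    rw [hy1, hy2, ← Matrix.mulVec_sub, ← Matrix.mulVec_sub, harg]
    simp only [Matrix.mulVec_neg, Matrix.mulVec_smul, Matrix.mulVec_mulVec, ← Matrix.mul_assoc]
    rfl
  -- difference of the x-parts
  have hxd : xb1 - xb2 = δ - e := by
    rw [hx1, hx2]
    have : σ • (Aᵀ *ᵥ yb1 - c) - σ • (Aᵀ *ᵥ yb2 - c) = σ • (Aᵀ *ᵥ yb1 - Aᵀ *ᵥ yb2) := by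
      module
    calc u1 + σ • (Aᵀ *ᵥ yb1 - c) - (u2 + σ • (Aᵀ *ᵥ yb2 - c))
        = δ + (σ • (Aᵀ *ᵥ yb1 - c) - σ • (Aᵀ *ᵥ yb2 - c)) := by rw [hδ]; module
      _ = δ + σ • (Aᵀ *ᵥ yb1 - Aᵀ *ᵥ yb2) := by rw [this]
      _ = δ + σ • (-(σ⁻¹ • e)) := by rw [hyd]
      _ = δ - e := by
          rw [smul_neg, smul_smul, mul_inv_cancel₀ hσ', one_smul]; module
  -- the v-difference pointwise
  have hvd : ∀ i, (c i - (Aᵀ *ᵥ yb1) i - σ⁻¹ * xb1 i) - (c i - (Aᵀ *ᵥ yb2) i - σ⁻¹ * xb2 i)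
      = σ⁻¹ * (2 * e i - δ i) := by
    intro i
    have h1 := congrFun hyd i
    have h2 := congrFun hxd i
    simp only [Pi.sub_apply, Pi.neg_apply, Pi.smul_apply, smul_eq_mul] at h1 h2
    linear_combination -h1 - σ⁻¹ * h2
  -- firm nonexpansiveness of the projection part
  have hζ : σ * (ζ ⬝ᵥ ζ) ≤ ζ ⬝ᵥ (fun i => 2 * e i - δ i) := by
    have hpt : ∀ i, ζ i * ζ i ≤ σ⁻¹ * (ζ i * (2 * e i - δ i)) := by
      intro i
      have := max_firm (c i - (Aᵀ *ᵥ yb1) i - σ⁻¹ * xb1 i)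
        (c i - (Aᵀ *ᵥ yb2) i - σ⁻¹ * xb2 i)
      rw [← hz1 i, ← hz2 i] at this
      have hζi : ζ i = zb1 i - zb2 i := rfl
      calc ζ i * ζ i = (zb1 i - zb2 i)^2 := by rw [hζi]; ring
        _ ≤ (zb1 i - zb2 i) * ((c i - (Aᵀ *ᵥ yb1) i - σ⁻¹ * xb1 i)
              - (c i - (Aᵀ *ᵥ yb2) i - σ⁻¹ * xb2 i)) := this
        _ = σ⁻¹ * (ζ i * (2 * e i - δ i)) := by rw [hvd i, hζi]; ring
    have hsum : ζ ⬝ᵥ ζ ≤ σ⁻¹ * (ζ ⬝ᵥ (fun i => 2 * e i - δ i)) := by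
      simp only [dotProduct, Finset.mul_sum]
      exact Finset.sum_le_sum (fun i _ => hpt i)
    calc σ * (ζ ⬝ᵥ ζ) ≤ σ * (σ⁻¹ * (ζ ⬝ᵥ (fun i => 2 * e i - δ i))) :=
          mul_le_mul_of_nonneg_left hsum hσ.le
      _ = ζ ⬝ᵥ (fun i => 2 * e i - δ i) := by
          rw [← mul_assoc, mul_inv_cancel₀ hσ', one_mul]
  -- the difference vector
  have hD : (u1 - ub1) - (u2 - ub2) = e - σ • ζ := by
    rw [hu1, hu2]
    calc u1 - (xb1 + σ • zb1) - (u2 - (xb2 + σ • zb2))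
        = (u1 - u2) - (xb1 - xb2) - σ • (zb1 - zb2) := by module
      _ = δ - (δ - e) - σ • ζ := by rw [← hδ, ← hζdef, hxd]
      _ = e - σ • ζ := by module
  -- P is a projection in the dot-product sense
  have hPe : e ⬝ᵥ e = e ⬝ᵥ δ := by
    calc e ⬝ᵥ e = e ⬝ᵥ (P *ᵥ δ) := by rw [← he]
      _ = (Pᵀ *ᵥ e) ⬝ᵥ δ := by rw [Matrix.dotProduct_mulVec, ← Matrix.mulVec_transpose]
      _ = ((Pᵀ * P) *ᵥ δ) ⬝ᵥ δ := by rw [he, Matrix.mulVec_mulVec]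
      _ = e ⬝ᵥ δ := by rw [hPsym, hPP, ← he]
  have hcomm : e ⬝ᵥ ζ = ζ ⬝ᵥ e := dotProduct_comm e ζ
  have hζ' : ζ ⬝ᵥ (fun i => 2 * e i - δ i) = 2 * (ζ ⬝ᵥ e) - ζ ⬝ᵥ δ := by
    simp only [dotProduct, Finset.mul_sum, ← Finset.sum_sub_distrib]
    apply Finset.sum_congr rfl
    intro i _
    ring
  rw [hD]
  simp only [sub_dotProduct, dotProduct_sub, smul_dotProduct,
    dotProduct_smul, smul_eq_mul]
  rw [hζ'] at hζ
  nlinarith [hζ, hPe, hcomm]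

lemma dot_self_nonneg {ι : Type*} [Fintype ι] (d : ι → ℝ) : 0 ≤ d ⬝ᵥ d :=
  Finset.sum_nonneg fun i _ => mul_self_nonneg (d i)

lemma final_bound {ι : Type*} [Fintype ι] (d w : ι → ℝ) (K : ℝ) (hK : 0 ≤ K)
    (h : (K + 1) * (d ⬝ᵥ d) ≤ d ⬝ᵥ w) :
    Real.sqrt (d ⬝ᵥ d) ≤ Real.sqrt (w ⬝ᵥ w) / (K + 1) := by
  set N := Real.sqrt (d ⬝ᵥ d) with hN
  set R := Real.sqrt (w ⬝ᵥ w) with hR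
  have hN0 : 0 ≤ N := Real.sqrt_nonneg _
  have hR0 : 0 ≤ R := Real.sqrt_nonneg _
  have hdd : d ⬝ᵥ d = N^2 := (Real.sq_sqrt (dot_self_nonneg d)).symm
  have hww : w ⬝ᵥ w = R^2 := (Real.sq_sqrt (dot_self_nonneg w)).symm
  have hcs : (d ⬝ᵥ w)^2 ≤ (d ⬝ᵥ d) * (w ⬝ᵥ w) := by
    have := Finset.sum_mul_sq_le_sq_mul_sq Finset.univ d w
    simpa [dotProduct, pow_two] using this
  have hdw : d ⬝ᵥ w ≤ N * R := by
    nlinarith [hcs, mul_nonneg hN0 hR0, sq_nonneg (N * R - d ⬝ᵥ w), sq_nonneg (N * R + d ⬝ᵥ w)]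
  have hkey : (K + 1) * N^2 ≤ N * R := by rw [← hdd]; linarith
  rcases eq_or_lt_of_le hN0 with h0 | h0
  · rw [← h0]; positivity
  · rw [le_div_iff₀ (by linarith : (0:ℝ) < K + 1)]
    have := mul_le_mul_of_nonneg_left hkey (le_of_lt (inv_pos.mpr h0))
    calc N * (K + 1) = N⁻¹ * ((K+1) * N^2) := by field_simp
      _ ≤ N⁻¹ * (N * R) := mul_le_mul_of_nonneg_left hkey (by positivity)
      _ = R := by field_simp

/-- Proposition 3 of the paper: non-ergodic `O(1/k)` rate of HOT.
If `w* = (y*, z*, x*)` is the (KKT) limit point of the sequence `{w̄ᵏ}` generated by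
the HOT iteration and `R₀ = ‖(x⁰ − x*) + σ (z⁰ − z*)‖`, then for every `k ≥ 0` the
Euclidean norm of the KKT residual
`ℛ(w̄ᵏ) = (b − A x̄ᵏ, z̄ᵏ − Π_{ℝ₊}(z̄ᵏ − x̄ᵏ), c − Aᵀ ȳᵏ − z̄ᵏ)` satisfies
`‖ℛ(w̄ᵏ)‖ ≤ ((σ + 1)/σ) · R₀ / (k + 1)`. -/
theorem stmt10 (m n : ℕ) (hm : 0 < m) (hn : 0 < n)
    (μ1 μ2 : Fin n × Fin m → ℝ)
    (hμ1 : ∀ p, 0 ≤ μ1 p) (hμ2 : ∀ p, 0 ≤ μ2 p)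
    (hs1 : ∑ p, μ1 p = 1) (hs2 : ∑ p, μ2 p = 1)
    (σ : ℝ) (hσ : 0 < σ)
    (y ybar : ℕ → ((Fin n × Fin m) ⊕ (Fin n × Fin m) ⊕ Fin (n * m - 1)) → ℝ)
    (z zbar x xbar : ℕ → ((Fin n × Fin m × Fin m) ⊕ (Fin n × Fin n × Fin m)) → ℝ)
    -- Step 1:  ȳᵏ = (A Aᵀ)⁻¹ ( b/σ − A (xᵏ/σ + zᵏ − c) )
    (hy : ∀ k, ybar k = (Amat m n hm * (Amat m n hm)ᵀ)⁻¹.mulVec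
      (σ⁻¹ • bvec m n hm μ1 μ2 -
        (Amat m n hm).mulVec (σ⁻¹ • x k + z k - cvec m n)))
    -- Step 2:  x̄ᵏ = xᵏ + σ (Aᵀ ȳᵏ + zᵏ − c)
    (hx : ∀ k, xbar k = x k + σ • ((Amat m n hm)ᵀ.mulVec (ybar k) + z k - cvec m n))
    -- Step 3:  z̄ᵏ = Π_{ℝ₊}( c − Aᵀ ȳᵏ − x̄ᵏ/σ )
    (hz : ∀ k, zbar k = fun i =>
      max (cvec m n i - (Amat m n hm)ᵀ.mulVec (ybar k) i - xbar k i / σ) 0)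
    -- Step 4 (Halpern step):  wᵏ⁺¹ = (1/(k+2)) w⁰ + ((k+1)/(k+2)) (2 w̄ᵏ − wᵏ)
    (hky : ∀ k, y (k + 1) =
      (1 / ((k : ℝ) + 2)) • y 0 + (((k : ℝ) + 1) / ((k : ℝ) + 2)) • ((2 : ℝ) • ybar k - y k))
    (hkz : ∀ k, z (k + 1) =
      (1 / ((k : ℝ) + 2)) • z 0 + (((k : ℝ) + 1) / ((k : ℝ) + 2)) • ((2 : ℝ) • zbar k - z k))
    (hkx : ∀ k, x (k + 1) =
      (1 / ((k : ℝ) + 2)) • x 0 + (((k : ℝ) + 1) / ((k : ℝ) + 2)) • ((2 : ℝ) • xbar k - x k))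
    -- `w* = (y*, z*, x*)` is the limit point of `{w̄ᵏ}`, which is a KKT point
    (ystar : ((Fin n × Fin m) ⊕ (Fin n × Fin m) ⊕ Fin (n * m - 1)) → ℝ)
    (zstar xstar : ((Fin n × Fin m × Fin m) ⊕ (Fin n × Fin n × Fin m)) → ℝ)
    (hlim : Tendsto (fun k => (ybar k, zbar k, xbar k)) atTop (𝓝 (ystar, zstar, xstar)))
    (hKKT1 : (Amat m n hm)ᵀ.mulVec ystar + zstar = cvec m n)
    (hKKT2 : (Amat m n hm).mulVec xstar = bvec m n hm μ1 μ2)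
    (hKKT3 : ∀ i, 0 ≤ xstar i) (hKKT4 : ∀ i, 0 ≤ zstar i)
    (hKKT5 : xstar ⬝ᵥ zstar = 0)
    -- `R₀ = ‖x⁰ − x* + σ (z⁰ − z*)‖`
    (R0 : ℝ)
    (hR0 : R0 = Real.sqrt (∑ i, ((x 0 i - xstar i) + σ * (z 0 i - zstar i)) ^ 2)) :
    ∀ k : ℕ,
      Real.sqrt
          ((∑ i, (bvec m n hm μ1 μ2 i - (Amat m n hm).mulVec (xbar k) i) ^ 2) +
           (∑ i, (zbar k i - max (zbar k i - xbar k i) 0) ^ 2) +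
           (∑ i, (cvec m n i - (Amat m n hm)ᵀ.mulVec (ybar k) i - zbar k i) ^ 2)) ≤
        ((σ + 1) / σ) * R0 / ((k : ℝ) + 1) := by
  intro k
  set A := Amat m n hm with hA
  set b := bvec m n hm μ1 μ2 with hb
  set c := cvec m n with hc
  have hσ' : σ ≠ 0 := ne_of_gt hσ
  have hdet : IsUnit (A * Aᵀ).det := isUnit_S m n hm hn
  have hSS : (A * Aᵀ) * (A * Aᵀ)⁻¹ = 1 := Matrix.mul_nonsing_inv _ hdet
  -- the u-sequences
  set u : ℕ → ((Fin n × Fin m × Fin m) ⊕ (Fin n × Fin n × Fin m)) → ℝ :=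
    fun j => x j + σ • z j with hu
  set ub : ℕ → ((Fin n × Fin m × Fin m) ⊕ (Fin n × Fin n × Fin m)) → ℝ :=
    fun j => xbar j + σ • zbar j with hub
  set ustar := xstar + σ • zstar with hustar
  have huj : ∀ j, u j = x j + σ • z j := fun j => rfl
  have hubj : ∀ j, ub j = xbar j + σ • zbar j := fun j => rfl
  -- step relations for the iterates
  have hyu : ∀ j, ybar j = (A * Aᵀ)⁻¹ *ᵥ (σ⁻¹ • b - A *ᵥ (σ⁻¹ • u j - c)) := by
    intro j
    rw [hy j]
    have harg : σ⁻¹ • x j + z j - c = σ⁻¹ • u j - c := by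
      rw [huj j]
      match_scalars <;> field_simp
    rw [harg]
  have hxu : ∀ j, xbar j = u j + σ • (Aᵀ *ᵥ ybar j - c) := by
    intro j
    rw [hx j, huj j]
    module
  have hzu : ∀ j i, zbar j i = max (c i - (Aᵀ *ᵥ ybar j) i - σ⁻¹ * xbar j i) 0 := by
    intro j i
    rw [congrFun (hz j) i, div_eq_inv_mul]
  -- step relations for the KKT point
  have hzmc : Aᵀ *ᵥ ystar - c = -zstar := by rw [← hKKT1]; module
  have hyst : ystar = (A * Aᵀ)⁻¹ *ᵥ (σ⁻¹ • b - A *ᵥ (σ⁻¹ • ustar - c)) := by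
    have harg : σ⁻¹ • ustar - c = σ⁻¹ • xstar - Aᵀ *ᵥ ystar := by
      rw [hustar, ← hKKT1]
      match_scalars <;> field_simp <;> ring
    have harg2 : A *ᵥ (σ⁻¹ • ustar - c) = σ⁻¹ • b - (A * Aᵀ) *ᵥ ystar := by
      rw [harg, Matrix.mulVec_sub, Matrix.mulVec_smul, hKKT2, Matrix.mulVec_mulVec]
    rw [harg2]
    have h3 : σ⁻¹ • b - (σ⁻¹ • b - (A * Aᵀ) *ᵥ ystar) = (A * Aᵀ) *ᵥ ystar := by module
    rw [h3, Matrix.mulVec_mulVec, Matrix.nonsing_inv_mul _ hdet, Matrix.one_mulVec]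
  have hxst : xstar = ustar + σ • (Aᵀ *ᵥ ystar - c) := by
    rw [hzmc, hustar]
    module
  have hcomp : ∀ i, xstar i * zstar i = 0 := by
    intro i
    have := (Finset.sum_eq_zero_iff_of_nonneg
      (fun i _ => mul_nonneg (hKKT3 i) (hKKT4 i))).mp hKKT5 i (Finset.mem_univ i)
    exact this
  have hzst : ∀ i, zstar i = max (c i - (Aᵀ *ᵥ ystar) i - σ⁻¹ * xstar i) 0 := by
    intro i
    have hci : c i - (Aᵀ *ᵥ ystar) i = zstar i := by
      have := congrFun hKKT1 i
      simp only [Pi.add_apply] at this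
      linarith
    rw [hci]
    rcases mul_eq_zero.mp (hcomp i) with hx0 | hz0
    · rw [hx0, mul_zero, sub_zero]
      exact (max_eq_left (hKKT4 i)).symm
    · rw [hz0, zero_sub]
      rw [max_eq_right (by
        have h1 : 0 ≤ σ⁻¹ * xstar i := mul_nonneg (by positivity) (hKKT3 i)
        linarith)]
  -- monotonicity along iterates and versus the KKT point
  have hmono : ∀ j l : ℕ, ((u j - ub j) - (u l - ub l)) ⬝ᵥ ((u j - ub j) - (u l - ub l))
      ≤ ((u j - ub j) - (u l - ub l)) ⬝ᵥ (u j - u l) := by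
    intro j l
    exact step_firm A hdet σ hσ b c (u j) (u l) (ub j) (ub l) (ybar j) (ybar l)
      (xbar j) (xbar l) (zbar j) (zbar l)
      (hyu j) (hxu j) (hzu j) (hubj j) (hyu l) (hxu l) (hzu l) (hubj l)
  have hstar : ∀ j : ℕ, (u j - ub j) ⬝ᵥ (u j - ub j) ≤ (u j - ub j) ⬝ᵥ (u j - ustar) := by
    intro j
    have := step_firm A hdet σ hσ b c (u j) ustar (ub j) ustar (ybar j) ystar
      (xbar j) xstar (zbar j) zstar
      (hyu j) (hxu j) (hzu j) (hubj j) hyst hxst hzst hustar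
    simpa using this
  -- Halpern recurrence for u
  have hrec : ∀ j : ℕ, u (j + 1) =
      (1 / ((j : ℝ) + 2)) • u 0 + (((j : ℝ) + 1) / ((j : ℝ) + 2)) • ((2 : ℝ) • ub j - u j) := by
    intro j
    rw [huj (j+1), hkx j, hkz j, huj 0, huj j, hubj j]
    module
  have hinv := halpern_inv u ub hmono hrec
  -- combine to get the rate for d = u k - ub k
  set d := u k - ub k with hd
  have hcomb : ((k : ℝ) + 1) * (d ⬝ᵥ d) ≤ d ⬝ᵥ (u 0 - ustar) := by
    have hsplit : d ⬝ᵥ (u 0 - ustar) = d ⬝ᵥ (u 0 - u k) + d ⬝ᵥ (u k - ustar) := by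
      rw [← dotProduct_add]
      congr 1
      module
    rw [hsplit]
    have h1 := hinv k
    have h2 := hstar k
    nlinarith [h1, h2]
  have hRate : Real.sqrt (d ⬝ᵥ d) ≤ Real.sqrt ((u 0 - ustar) ⬝ᵥ (u 0 - ustar)) / ((k : ℝ) + 1) :=
    final_bound d (u 0 - ustar) (k : ℝ) (Nat.cast_nonneg k) hcomb
  -- identify R0
  have hR0' : R0 = Real.sqrt ((u 0 - ustar) ⬝ᵥ (u 0 - ustar)) := by
    rw [hR0]
    congr 1
    rw [dotProduct]
    apply Finset.sum_congr rfl
    intro i _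
    rw [huj 0, hustar]
    simp only [Pi.sub_apply, Pi.add_apply, Pi.smul_apply, smul_eq_mul]
    ring
  -- residual 1 vanishes
  have hAx : A *ᵥ xbar k = b := by
    have h1 : A *ᵥ (Aᵀ *ᵥ ybar k) = σ⁻¹ • b - A *ᵥ (σ⁻¹ • x k + z k - c) := by
      rw [hy k]
      simp only [Matrix.mulVec_mulVec, ← Matrix.mul_assoc]
      rw [hSS, Matrix.one_mulVec]
    rw [hx k]
    simp only [Matrix.mulVec_add, Matrix.mulVec_sub, Matrix.mulVec_smul]
    rw [h1]
    simp only [Matrix.mulVec_add, Matrix.mulVec_sub, Matrix.mulVec_smul]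
    match_scalars <;> field_simp <;> ring
  have hS1 : (∑ i, (b i - (A *ᵥ xbar k) i) ^ 2) = 0 := by
    apply Finset.sum_eq_zero
    intro i _
    rw [hAx]
    ring
  -- pointwise hypotheses for the residual bounds
  have hXi : ∀ i, xbar k i = x k i + σ * ((Aᵀ *ᵥ ybar k) i + z k i - c i) := by
    intro i
    have := congrFun (hx k) i
    simpa using this
  set Dk := ∑ i, ((x k i - xbar k i) + σ * (z k i - zbar k i)) ^ 2 with hDk
  have hDk0 : 0 ≤ Dk := Finset.sum_nonneg fun i _ => sq_nonneg _
  have hS2 : (∑ i, (zbar k i - max (zbar k i - xbar k i) 0) ^ 2) ≤ Dk := by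
    apply Finset.sum_le_sum
    intro i _
    have hzi := congrFun (hz k) i
    rw [hzi]
    exact key2 σ hσ (x k i) (z k i) (c i) ((Aᵀ *ᵥ ybar k) i) (xbar k i) (hXi i)
  have hS3 : (∑ i, (c i - (Aᵀ *ᵥ ybar k) i - zbar k i) ^ 2) = Dk / σ ^ 2 := by
    rw [hDk, Finset.sum_div]
    apply Finset.sum_congr rfl
    intro i _
    exact key3 σ hσ (x k i) (z k i) (c i) ((Aᵀ *ᵥ ybar k) i) (xbar k i) (zbar k i) (hXi i)
  have hDkd : Dk = d ⬝ᵥ d := by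
    rw [hDk, dotProduct]
    apply Finset.sum_congr rfl
    intro i _
    rw [hd, huj k, hubj k]
    simp only [Pi.sub_apply, Pi.add_apply, Pi.smul_apply, smul_eq_mul]
    ring
  -- final chain
  have hchain1 : (∑ i, (b i - (A *ᵥ xbar k) i) ^ 2)
      + (∑ i, (zbar k i - max (zbar k i - xbar k i) 0) ^ 2)
      + (∑ i, (c i - (Aᵀ *ᵥ ybar k) i - zbar k i) ^ 2) ≤ Dk * (1 + σ⁻¹) ^ 2 := by
    rw [hS1, hS3]
    have hinvσ : 0 < σ⁻¹ := inv_pos.mpr hσ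
    have : Dk / σ ^ 2 = Dk * (σ⁻¹)^2 := by field_simp
    nlinarith [hS2, hDk0, hinvσ, mul_nonneg hDk0 hinvσ.le]
  calc Real.sqrt ((∑ i, (b i - (A *ᵥ xbar k) i) ^ 2)
        + (∑ i, (zbar k i - max (zbar k i - xbar k i) 0) ^ 2)
        + (∑ i, (c i - (Aᵀ *ᵥ ybar k) i - zbar k i) ^ 2))
      ≤ Real.sqrt (Dk * (1 + σ⁻¹) ^ 2) := Real.sqrt_le_sqrt hchain1
    _ = (1 + σ⁻¹) * Real.sqrt Dk := by
        rw [Real.sqrt_mul hDk0, Real.sqrt_sq (by positivity)]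
        ring
    _ ≤ (1 + σ⁻¹) * (Real.sqrt ((u 0 - ustar) ⬝ᵥ (u 0 - ustar)) / ((k : ℝ) + 1)) := by
        apply mul_le_mul_of_nonneg_left _ (by positivity)
        rw [hDkd]
        exact hRate
    _ = (σ + 1) / σ * R0 / ((k : ℝ) + 1) := by
        rw [hR0']
        field_simp <;> ring
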